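/- Let f : ℝ^d → ℝ be C⁴ at a local minimum x* with F = ker ∇²f(x*) and E = F^⊥. Then for all h ∈ ℝ^d and all λ ∈ ℝ, the quantity (1/2)∇²f(x*)·p_E(h)^{⊗2} + (λ/2)∇³f(x*)·p_E(h)⊗p_F(h)^{⊗2} + (λ²/4!)∇⁴f(x*)·p_F(h)^{⊗4} is nonnegative; consequently (∇³f(x*)·p_E(h)⊗p_F(h)^{⊗2})² ≤ (1/3)(∇²f(x*)·p_E(h)^{⊗2})(∇⁴f(x*)·p_F(h)^{⊗4}). -/

import Mathlib

/-!
For `v` in the kernel of the Hessian and any `e`, `c`, expand `f` to fourth order along the two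
parabolas `s ↦ x ± s v + c s² e`. In `f(x + s v + c s² e) + f(x - s v + c s² e) - 2 f(x)` the odd
powers of `v` cancel, the gradient and the Hessian applied to `v` vanish, and what is left is
`s⁴ (c² ∇²f·e² + c ∇³f·e⊗v² + ∇⁴f·v⁴ / 12) + o(s⁴)`. Minimality of `x` makes this nonnegative,
so the quadratic `c ↦ c² ∇²f·e² + c ∇³f·e⊗v² + ∇⁴f·v⁴ / 12` is nonnegative on `ℝ`: its
discriminant gives the inequality, and the substitution `c = 1/λ` gives the quadratic in `λ`.
-/

open Filter Topology Asymptotics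
open scoped Nat

section Taylor

variable {E F : Type*} [NormedAddCommGroup E] [NormedSpace ℝ E]
  [NormedAddCommGroup F] [NormedSpace ℝ F]

/-- The Taylor polynomial of degree `n` of `f` at `x`, evaluated at the increment `y`. -/
noncomputable def taylorEval (f : E → F) (n : ℕ) (x y : E) : F :=
  ∑ k ∈ Finset.range (n + 1), (k ! : ℝ)⁻¹ • iteratedFDeriv ℝ k f x fun _ => y

theorem ContDiff.sub_taylorEval_eq_integral [CompleteSpace F] {f : E → F} {n : ℕ}
    (hf : ContDiff ℝ (n + 1) f) (x y : E) :
    f (x + y) - taylorEval f (n + 1) x y = (n ! : ℝ)⁻¹ • ∫ t in 0..1,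
      (1 - t) ^ n • (iteratedFDeriv ℝ (n + 1) f (x + t • y) - iteratedFDeriv ℝ (n + 1) f x)
        fun _ => y := by
  have hint : IntervalIntegrable
      (fun t : ℝ => (1 - t) ^ n • iteratedFDeriv ℝ (n + 1) f (x + t • y) fun _ => y)
      MeasureTheory.volume 0 1 :=
    Continuous.intervalIntegrable (by fun_prop) _ _
  have hpow : ∫ t in (0 : ℝ)..1, (1 - t) ^ n = ((n : ℝ) + 1)⁻¹ := by
    simp [intervalIntegral.integral_comp_sub_left fun t : ℝ => t ^ n]
  rw [taylorEval, map_add_eq_sum_add_integral_iteratedFDeriv (n := n) fun t _ => hf.contDiffAt,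
    Finset.sum_range_succ _ (n + 1), add_sub_add_left_eq_sub]
  simp only [sub_apply, smul_sub]
  rw [intervalIntegral.integral_sub hint (Continuous.intervalIntegrable (by fun_prop) _ _),
    intervalIntegral.integral_smul_const, hpow, smul_sub, smul_smul, Nat.factorial_succ]
  push_cast
  rw [mul_inv, mul_comm]

theorem ContDiff.isLittleO_sub_taylorEval [CompleteSpace F] {f : E → F} {n : ℕ}
    (hf : ContDiff ℝ (n + 1) f) (x : E) :
    (fun y => f (x + y) - taylorEval f (n + 1) x y) =o[𝓝 0] fun y => ‖y‖ ^ (n + 1) := by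
  set D := iteratedFDeriv ℝ (n + 1) f
  have hD : Continuous D := hf.continuous_iteratedFDeriv le_rfl
  refine IsLittleO.of_bound fun ε hε => ?_
  obtain ⟨δ, hδ, hclose⟩ := Metric.continuousAt_iff.1 (hD.continuousAt (x := x)) ε hε
  filter_upwards [Metric.ball_mem_nhds 0 hδ] with y hy
  rw [mem_ball_zero_iff] at hy
  have hintegrand : ∀ t ∈ Set.uIoc (0 : ℝ) 1,
      ‖(1 - t) ^ n • (D (x + t • y) - D x) fun _ => y‖ ≤ ε * ‖y‖ ^ (n + 1) := by
    intro t ht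
    rw [Set.uIoc_of_le zero_le_one] at ht
    obtain ⟨ht0, ht1⟩ := ht
    have hnear : ‖x + t • y - x‖ < δ := by
      rw [add_sub_cancel_left, norm_smul, Real.norm_of_nonneg ht0.le]
      exact lt_of_le_of_lt (mul_le_of_le_one_left (norm_nonneg y) ht1) hy
    calc ‖(1 - t) ^ n • (D (x + t • y) - D x) fun _ => y‖
        ≤ 1 * (‖D (x + t • y) - D x‖ * ∏ _i : Fin (n + 1), ‖y‖) := by
          rw [norm_smul]
          gcongr
          · rw [norm_pow, Real.norm_of_nonneg (by linarith)]
            exact pow_le_one₀ (by linarith) (by linarith)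
          · exact ContinuousMultilinearMap.le_opNorm _ _
      _ ≤ ε * ‖y‖ ^ (n + 1) := by
          rw [one_mul, Finset.prod_const, Finset.card_univ, Fintype.card_fin, ← dist_eq_norm]
          gcongr
          exact (hclose (by rwa [dist_eq_norm])).le
  rw [hf.sub_taylorEval_eq_integral, norm_smul, norm_pow, norm_norm]
  calc ‖(n ! : ℝ)⁻¹‖ * ‖∫ t in (0 : ℝ)..1, (1 - t) ^ n • (D (x + t • y) - D x) fun _ => y‖
      ≤ 1 * (ε * ‖y‖ ^ (n + 1) * |1 - 0|) := by
        gcongr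
        · rw [norm_inv, Real.norm_natCast]
          exact inv_le_one_of_one_le₀ (Nat.one_le_cast.2 n.factorial_pos)
        · exact intervalIntegral.norm_integral_le_of_norm_le_const hintegrand
    _ = ε * ‖y‖ ^ (n + 1) := by norm_num

end Taylor

theorem Asymptotics.IsLittleO.comp_smul_of_continuousAt {E F : Type*} [NormedAddCommGroup E]
    [NormedSpace ℝ E] [NormedAddCommGroup F] {R : E → F} {n : ℕ}
    (hR : R =o[𝓝 0] fun y => ‖y‖ ^ n) {w : ℝ → E} (hw : ContinuousAt w 0) :
    (fun s : ℝ => R (s • w s)) =o[𝓝 0] fun s => s ^ n := by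
  have hγ : Tendsto (fun s : ℝ => s • w s) (𝓝 0) (𝓝 0) := by
    simpa using (tendsto_id (x := 𝓝 (0 : ℝ))).smul hw.tendsto
  have hγO : (fun s : ℝ => s • w s) =O[𝓝 0] fun s => s := by
    simpa using (isBigO_refl (fun s : ℝ => s) (𝓝 0)).smul (hw.tendsto.isBigO_one ℝ)
  exact (hR.comp_tendsto hγ).trans_isBigO (hγO.norm_left.pow n)

section Multilinear

variable {𝕜 E F : Type*} [NontriviallyNormedField 𝕜] [NormedAddCommGroup E] [NormedSpace 𝕜 E]
  [NormedAddCommGroup F] [NormedSpace 𝕜 F]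

theorem ContinuousMultilinearMap.map_const_smul {n : ℕ} (M : E [×n]→L[𝕜] F) (s : 𝕜) (y : E) :
    M (fun _ => s • y) = s ^ n • M fun _ => y := by
  simpa using M.map_smul_univ (fun _ => s) (fun _ => y)

theorem iteratedFDeriv_three_apply (f : E → F) (z : E) (m : Fin 3 → E) :
    iteratedFDeriv 𝕜 3 f z m = fderiv 𝕜 (fderiv 𝕜 (fderiv 𝕜 f)) z (m 0) (m 1) (m 2) := by
  rw [iteratedFDeriv_succ_apply_right, iteratedFDeriv_two_apply]
  rfl

theorem fderiv_apply_comm_of_forall_apply_comm {g : E → E →L[𝕜] E →L[𝕜] F}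
    (hg : ∀ z p q, g z p q = g z q p) (y a p q : E) :
    fderiv 𝕜 g y a p q = fderiv 𝕜 g y a q p := by
  have hflip : ContinuousLinearMap.flipₗᵢ 𝕜 E E F ∘ g = g :=
    funext fun z => ContinuousLinearMap.ext fun p => ContinuousLinearMap.ext fun q => hg z q p
  conv_lhs => rw [← hflip, LinearIsometryEquiv.comp_fderiv (𝕜 := 𝕜)
    (E := E →L[𝕜] E →L[𝕜] F) (F := E →L[𝕜] E →L[𝕜] F) (G := E)]
  rfl

theorem ContinuousLinearMap.cube_add_add_cube_sub (M : E →L[𝕜] E →L[𝕜] E →L[𝕜] F)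
    (h₁₂ : ∀ p q r, M p q r = M q p r) (h₂₃ : ∀ p q r, M p q r = M p r q) (v a : E) :
    M (a + v) (a + v) (a + v) + M (a - v) (a - v) (a - v) = 2 • M a a a + 6 • M a v v := by
  have hvav : M v a v = M a v v := h₁₂ v a v
  have hava : M a v a = M a a v := h₂₃ a v a
  have hvva : M v v a = M a v v := (h₂₃ v v a).trans (h₁₂ v a v)
  have hvaa : M v a a = M a a v := (h₁₂ v a a).trans (h₂₃ a v a)
  simp only [map_add, map_sub, add_apply, sub_apply, hvav, hava, hvva, hvaa]
  abel

end Multilinear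

theorem IsLocalMin.eventually_le_add_smul {E β : Type*} [NormedAddCommGroup E] [NormedSpace ℝ E]
    [Preorder β] {f : E → β} {x : E} (hmin : IsLocalMin f x) {w : ℝ → E} (hw : ContinuousAt w 0) :
    ∀ᶠ s in 𝓝 (0 : ℝ), f x ≤ f (x + s • w s) := by
  have hlim : Tendsto (fun s : ℝ => x + s • w s) (𝓝 0) (𝓝 x) := by
    simpa using tendsto_const_nhds.add ((tendsto_id (x := 𝓝 (0 : ℝ))).smul hw.tendsto)
  exact hlim.eventually hmin

theorem nonneg_of_isLittleO_pow {g q : ℝ → ℝ} {n : ℕ} (hg : ∀ᶠ s in 𝓝[>] 0, 0 ≤ g s)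
    (hq : ContinuousAt q 0) (h : (fun s => g s - s ^ n * q s) =o[𝓝[>] 0] fun s => s ^ n) :
    0 ≤ q 0 := by
  have hlim : Tendsto (fun s => g s / s ^ n) (𝓝[>] 0) (𝓝 (q 0)) := by
    have := h.tendsto_div_nhds_zero.add (hq.tendsto.mono_left nhdsWithin_le_nhds)
    rw [zero_add] at this
    refine this.congr' ?_
    filter_upwards [self_mem_nhdsWithin] with s hs
    have : s ^ n ≠ 0 := pow_ne_zero n (ne_of_gt hs)
    field_simp
    ring
  refine ge_of_tendsto hlim ?_
  filter_upwards [hg, self_mem_nhdsWithin] with s hgs hs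
  exact div_nonneg hgs (pow_pos hs n).le

theorem nonneg_reverse_of_forall_nonneg {a b d : ℝ} (h : ∀ c, 0 ≤ a * c ^ 2 + b * c + d) (l : ℝ) :
    0 ≤ a + b * l + d * l ^ 2 := by
  rcases eq_or_ne l 0 with rfl | hl
  · have hdisc := discrim_le_zero fun c : ℝ => by simpa only [sq] using h c
    rw [discrim] at hdisc
    nlinarith [h 1, h (-1)]
  · have := mul_nonneg (h l⁻¹) (sq_nonneg l)
    field_simp at this
    linarith

section FourthOrder

variable {E : Type*} [NormedAddCommGroup E] [NormedSpace ℝ E] {f : E → ℝ} {x : E}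

theorem taylorEval_four_smul (s : ℝ) (w : E) :
    taylorEval f 4 x (s • w) = f x + s * fderiv ℝ f x w + s ^ 2 / 2 * fderiv ℝ (fderiv ℝ f) x w w
      + s ^ 3 / 6 * fderiv ℝ (fderiv ℝ (fderiv ℝ f)) x w w w
      + s ^ 4 / 24 * iteratedFDeriv ℝ 4 f x fun _ => w := by
  simp only [taylorEval, Finset.sum_range_succ, Finset.sum_range_zero,
    ContinuousMultilinearMap.map_const_smul, iteratedFDeriv_zero_apply, iteratedFDeriv_one_apply,
    iteratedFDeriv_two_apply, iteratedFDeriv_three_apply]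
  simp [Nat.factorial]
  ring

theorem taylorEval_four_smul_add_add_smul_sub (hf : ContDiff ℝ 4 f)
    (hcrit : fderiv ℝ f x = 0) {v : E} (hv : ∀ w, fderiv ℝ (fderiv ℝ f) x v w = 0)
    (e : E) (c s : ℝ) :
    taylorEval f 4 x (s • ((c * s) • e + v)) + taylorEval f 4 x (s • ((c * s) • e - v)) - 2 * f x
      = s ^ 4 * (c ^ 2 * fderiv ℝ (fderiv ℝ f) x e e + c * fderiv ℝ (fderiv ℝ (fderiv ℝ f)) x e v v
        + c ^ 3 * s ^ 2 / 3 * fderiv ℝ (fderiv ℝ (fderiv ℝ f)) x e e e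
        + ((iteratedFDeriv ℝ 4 f x fun _ => (c * s) • e + v)
          + (iteratedFDeriv ℝ 4 f x fun _ => (c * s) • e - v)) / 24) := by
  set D2 := fderiv ℝ (fderiv ℝ f) x
  set D3 := fderiv ℝ (fderiv ℝ (fderiv ℝ f)) x
  have hD2 : ∀ p q, D2 p q = D2 q p := (hf.contDiffAt.isSymmSndFDerivAt (by simp; norm_cast)).eq
  have hD3₁₂ : ∀ p q r, D3 p q r = D3 q p r := fun p q =>
    DFunLike.congr_fun (((hf.fderiv_right (m := 3) (by norm_num)).contDiffAt.isSymmSndFDerivAt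
      (by simp; norm_cast)).eq p q)
  have hD3₂₃ : ∀ p q r, D3 p q r = D3 p r q := fderiv_apply_comm_of_forall_apply_comm
    (fun z => (hf.contDiffAt (x := z).isSymmSndFDerivAt (by simp; norm_cast)).eq) x
  have hD2p : D2 ((c * s) • e + v) ((c * s) • e + v) = (c * s) ^ 2 * D2 e e := by
    simp only [map_add, add_apply, hv, hD2 _ v, map_smul, smul_apply, smul_eq_mul]
    ring
  have hD2m : D2 ((c * s) • e - v) ((c * s) • e - v) = (c * s) ^ 2 * D2 e e := by
    simp only [map_sub, sub_apply, hv, hD2 _ v, map_smul, smul_apply, smul_eq_mul]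
    ring
  have hD3 := D3.cube_add_add_cube_sub hD3₁₂ hD3₂₃ v ((c * s) • e)
  simp only [map_smul, smul_apply, smul_eq_mul, nsmul_eq_mul] at hD3
  rw [taylorEval_four_smul, taylorEval_four_smul, hD2p, hD2m, hcrit]
  simp only [zero_apply]
  linear_combination (s ^ 3 / 6) * hD3

theorem IsLocalMin.fourthOrder_nonneg (hf : ContDiff ℝ 4 f) (hmin : IsLocalMin f x) {v : E}
    (hv : ∀ w, iteratedFDeriv ℝ 2 f x ![v, w] = 0) (e : E) (c : ℝ) :
    0 ≤ 1 / 2 * iteratedFDeriv ℝ 2 f x ![e, e] * c ^ 2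
      + 1 / 2 * iteratedFDeriv ℝ 3 f x ![e, v, v] * c
      + 1 / 24 * iteratedFDeriv ℝ 4 f x fun _ => v := by
  have hD2v : ∀ w, fderiv ℝ (fderiv ℝ f) x v w = 0 := by
    simpa [iteratedFDeriv_two_apply] using hv
  set wp : ℝ → E := fun s => (c * s) • e + v
  set wm : ℝ → E := fun s => (c * s) • e - v
  set g : ℝ → ℝ := fun s => f (x + s • wp s) + f (x + s • wm s) - 2 * f x
  set q : ℝ → ℝ := fun s => c ^ 2 * fderiv ℝ (fderiv ℝ f) x e e
    + c * fderiv ℝ (fderiv ℝ (fderiv ℝ f)) x e v v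
    + c ^ 3 * s ^ 2 / 3 * fderiv ℝ (fderiv ℝ (fderiv ℝ f)) x e e e
    + ((iteratedFDeriv ℝ 4 f x fun _ => wp s) + (iteratedFDeriv ℝ 4 f x fun _ => wm s)) / 24
  have hrem : (fun s => g s - s ^ 4 * q s) =o[𝓝 0] fun s => s ^ 4 := by
    have hR : (fun y => f (x + y) - taylorEval f 4 x y) =o[𝓝 0] fun y => ‖y‖ ^ 4 :=
      (show ContDiff ℝ ((3 : ℕ) + 1) f by exact_mod_cast hf).isLittleO_sub_taylorEval x
    refine ((hR.comp_smul_of_continuousAt (w := wp) (by fun_prop)).add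
      (hR.comp_smul_of_continuousAt (w := wm) (by fun_prop))).congr_left fun s => ?_
    simp only [g, q, wp, wm]
    linarith [taylorEval_four_smul_add_add_smul_sub hf hmin.fderiv_eq_zero hD2v e c s]
  have hg : ∀ᶠ s in 𝓝 0, 0 ≤ g s := by
    filter_upwards [hmin.eventually_le_add_smul (w := wp) (by fun_prop),
      hmin.eventually_le_add_smul (w := wm) (by fun_prop)] with s hp hm
    linarith
  have hq0 := nonneg_of_isLittleO_pow (hg.filter_mono nhdsWithin_le_nhds) (by fun_prop)
    (hrem.mono nhdsWithin_le_nhds)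
  have hneg : (iteratedFDeriv ℝ 4 f x fun _ => -v) = iteratedFDeriv ℝ 4 f x fun _ => v := by
    have := (iteratedFDeriv ℝ 4 f x).map_const_smul (-1) v
    norm_num at this
    exact this
  simp only [q, wp, wm, mul_zero, zero_smul, zero_add, zero_sub, hneg] at hq0
  simp only [iteratedFDeriv_two_apply, iteratedFDeriv_three_apply, Matrix.cons_val_zero,
    Matrix.cons_val_one, Matrix.cons_val_two, Matrix.head_cons, Matrix.tail_cons]
  norm_num at hq0
  linarith

end FourthOrder

/-- With F = ker ∇²f(x*) and E = Fᗮ at a local minimum, the quadratic (in λ)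
(1/2)∇²f·p_E(h)^{⊗2} + (λ/2)∇³f·p_E(h)⊗p_F(h)^{⊗2} + (λ²/4!)∇⁴f·p_F(h)^{⊗4}
is nonnegative; consequently the discriminant inequality
(∇³f·p_E(h)⊗p_F(h)^{⊗2})² ≤ (1/3)(∇²f·p_E(h)^{⊗2})(∇⁴f·p_F(h)^{⊗4}) holds. -/
theorem stmt19 (d : ℕ) (f : EuclideanSpace ℝ (Fin d) → ℝ) (x : EuclideanSpace ℝ (Fin d))
    (hf : ContDiff ℝ 4 f) (hmin : IsLocalMin f x)
    (F : Submodule ℝ (EuclideanSpace ℝ (Fin d)))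
    (hF : ∀ v, v ∈ F ↔ ∀ w : EuclideanSpace ℝ (Fin d), iteratedFDeriv ℝ 2 f x ![v, w] = 0) :
    (∀ (h : EuclideanSpace ℝ (Fin d)) (lam : ℝ),
      0 ≤ (1 / 2) * iteratedFDeriv ℝ 2 f x
            ![(Submodule.orthogonalProjectionOnto Fᗮ h : EuclideanSpace ℝ (Fin d)),
              (Submodule.orthogonalProjectionOnto Fᗮ h : EuclideanSpace ℝ (Fin d))]
        + (lam / 2) * iteratedFDeriv ℝ 3 f x
            ![(Submodule.orthogonalProjectionOnto Fᗮ h : EuclideanSpace ℝ (Fin d)),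
              (Submodule.orthogonalProjectionOnto F h : EuclideanSpace ℝ (Fin d)),
              (Submodule.orthogonalProjectionOnto F h : EuclideanSpace ℝ (Fin d))]
        + (lam ^ 2 / (Nat.factorial 4) : ℝ) * iteratedFDeriv ℝ 4 f x
            (fun _ => (Submodule.orthogonalProjectionOnto F h : EuclideanSpace ℝ (Fin d)))) ∧
    (∀ h : EuclideanSpace ℝ (Fin d),
      (iteratedFDeriv ℝ 3 f x
          ![(Submodule.orthogonalProjectionOnto Fᗮ h : EuclideanSpace ℝ (Fin d)),
            (Submodule.orthogonalProjectionOnto F h : EuclideanSpace ℝ (Fin d)),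
            (Submodule.orthogonalProjectionOnto F h : EuclideanSpace ℝ (Fin d))]) ^ 2 ≤
        (1 / 3) * (iteratedFDeriv ℝ 2 f x
            ![(Submodule.orthogonalProjectionOnto Fᗮ h : EuclideanSpace ℝ (Fin d)),
              (Submodule.orthogonalProjectionOnto Fᗮ h : EuclideanSpace ℝ (Fin d))]) *
          (iteratedFDeriv ℝ 4 f x
            (fun _ => (Submodule.orthogonalProjectionOnto F h : EuclideanSpace ℝ (Fin d))))) := by
  have hquad := fun h : EuclideanSpace ℝ (Fin d) =>
    hmin.fourthOrder_nonneg hf ((hF _).1 (Submodule.orthogonalProjectionOnto F h).2)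
      (Submodule.orthogonalProjectionOnto Fᗮ h)
  refine ⟨fun h lam => ?_, fun h => ?_⟩
  · have := nonneg_reverse_of_forall_nonneg (hquad h) lam
    rw [show ((Nat.factorial 4 : ℕ) : ℝ) = 24 by norm_num [Nat.factorial]]
    linarith
  · have hdisc := discrim_le_zero fun c => by simpa only [sq] using hquad h c
    rw [discrim] at hdisc
    linarith
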